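/- Let n ∈ ℕ, Ψ(θ) = (√2/n)cos(nθ), and let g : [0,2π] → ℝ be absolutely continuous and 2π-periodic. Then the function θ ↦ ∫₀^θ g(θ')((Ψ'(θ'))² − 1) dθ' satisfies ‖∫₀^θ g((Ψ')² − 1)‖_{L¹(0,2π)} ≤ (C/n)(‖g‖_{L¹(0,2π)} + ‖g'‖_{L¹(0,2π)}) for a universal constant C. -/

import Mathlib

open MeasureTheory Real intervalIntegral Set

/-!
Since `Ψ'(θ)² - 1 = 2 sin²(nθ) - 1 = -cos(2nθ)`, the inner integral is `-∫₀^θ g(s) cos(2ns) ds`.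
Integrating by parts against the primitive `sin(2ns)/(2n)`, which vanishes at `0`, bounds it by
`(|g θ| + ‖g'‖_{L¹(0,2π)})/(2n)` for every `θ ∈ [0, 2π]`; integrating in `θ` gives the claim
with `C = π`.
-/

theorem integral_mul_deriv_eq_of_sub_eq_integral {f f' u u' : ℝ → ℝ} {a b : ℝ}
    (hf' : IntervalIntegrable f' volume a b)
    (hf : ∀ x ∈ uIcc a b, f x - f a = ∫ t in a..x, f' t)
    (hu : ∀ x, HasDerivAt u (u' x) x) (hu' : Continuous u') :
    ∫ x in a..b, f x * u' x = f b * u b - f a * u a - ∫ x in a..b, f' x * u x := by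
  set F : ℝ → ℝ := fun x ↦ ∫ t in a..x, f' t
  have hF : AbsolutelyContinuousOnInterval F a b :=
    hf'.absolutelyContinuousOnInterval_intervalIntegral left_mem_uIcc
  have hderiv_u : deriv u = u' := funext fun x ↦ (hu x).deriv
  have hu_ac : AbsolutelyContinuousOnInterval u a b :=
    (contDiff_one_iff_deriv.2 ⟨fun x ↦ (hu x).differentiableAt, hderiv_u ▸ hu'⟩).contDiffOn
      |>.absolutelyContinuousOnInterval
  have hderiv_F : ∀ᵐ x, x ∈ uIoc a b → deriv F x * u x = f' x * u x := by
    filter_upwards [hf'.ae_hasDerivAt_integral] with x hx hxab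
    rw [(hx (uIoc_subset_uIcc hxab) a left_mem_uIcc).deriv]
  have hparts := hF.integral_mul_deriv_eq_deriv_mul hu_ac
  rw [hderiv_u, integral_congr_ae hderiv_F] at hparts
  have hsplit : ∫ x in a..b, f x * u' x = f a * (u b - u a) + ∫ x in a..b, F x * u' x := by
    rw [← integral_eq_sub_of_hasDerivAt (fun x _ ↦ hu x) (hu'.intervalIntegrable _ _),
      ← intervalIntegral.integral_const_mul,
      ← intervalIntegral.integral_add (g := fun x ↦ F x * u' x)
        ((hu'.intervalIntegrable _ _).const_mul (f a))
        (hF.continuousOn.mul hu'.continuousOn).intervalIntegrable]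
    refine integral_congr fun x hx ↦ ?_
    simp only [F, ← hf x hx]
    ring
  rw [hsplit, hparts]
  simp only [F, integral_same, ← hf b right_mem_uIcc]
  ring

theorem sq_deriv_sqrt_two_div_mul_cos_sub_one {c : ℝ} (hc : c ≠ 0) (s : ℝ) :
    deriv (fun t ↦ √2 / c * cos (c * t)) s ^ 2 - 1 = -cos (2 * c * s) := by
  have hderiv : HasDerivAt (fun t ↦ √2 / c * cos (c * t)) (-(√2 * sin (c * s))) s :=
    (((hasDerivAt_id' s).const_mul c).cos.const_mul (√2 / c)).congr_deriv (by field_simp)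
  rw [hderiv.deriv, mul_assoc, cos_two_mul, neg_sq, mul_pow, sq_sqrt zero_le_two]
  linear_combination 2 * sin_sq_add_cos_sq (c * s)

theorem abs_integral_mul_cos_le {f f' : ℝ → ℝ} {k θ : ℝ} (hk : 0 < k) (hθ : 0 ≤ θ)
    (hf' : IntervalIntegrable f' volume 0 θ)
    (hf : ∀ x ∈ uIcc 0 θ, f x - f 0 = ∫ t in 0..x, f' t) :
    |∫ s in 0..θ, f s * cos (k * s)| ≤ (|f θ| + ∫ s in 0..θ, |f' s|) / k := by
  have hsin : ∀ x, HasDerivAt (fun s ↦ sin (k * s) / k) (cos (k * x)) x := fun x ↦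
    (((hasDerivAt_id' x).const_mul k).sin.div_const k).congr_deriv (by field_simp)
  rw [integral_mul_deriv_eq_of_sub_eq_integral hf' hf hsin (by fun_prop)]
  simp only [mul_zero, sin_zero, zero_div, sub_zero]
  have hboundary : |f θ * (sin (k * θ) / k)| ≤ |f θ| / k := by
    rw [abs_mul, abs_div, abs_of_pos hk, mul_div_assoc']
    gcongr
    exact mul_le_of_le_one_right (abs_nonneg _) (abs_sin_le_one _)
  have hbulk : |∫ s in 0..θ, f' s * (sin (k * s) / k)| ≤ (∫ s in 0..θ, |f' s|) / k := by
    simp only [mul_div_assoc']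
    rw [intervalIntegral.integral_div, abs_div, abs_of_pos hk]
    gcongr
    calc |∫ s in 0..θ, f' s * sin (k * s)| ≤ ∫ s in 0..θ, |f' s * sin (k * s)| :=
          abs_integral_le_integral_abs hθ
      _ ≤ ∫ s in 0..θ, |f' s| :=
          integral_mono_on hθ (hf'.mul_continuousOn (by fun_prop)).abs hf'.abs fun s _ ↦ by
            rw [abs_mul]
            exact mul_le_of_le_one_right (abs_nonneg _) (abs_sin_le_one _)
  calc _ ≤ |f θ * (sin (k * θ) / k)| + |∫ s in 0..θ, f' s * (sin (k * s) / k)| := abs_sub _ _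
    _ ≤ _ := by rw [add_div]; exact add_le_add hboundary hbulk

/-- for `g : [0,2π] → ℝ` absolutely continuous and `2π`-periodic, `n ≥ 1`
and `Ψ(θ) = (√2/n)cos(nθ)`, the primitive `θ ↦ ∫₀^θ g ((Ψ')² − 1)` satisfies
`‖∫₀^θ g((Ψ')² − 1)‖_{L¹(0,2π)} ≤ (C/n)(‖g‖_{L¹(0,2π)} + ‖g'‖_{L¹(0,2π)})`
for a universal constant `C`. -/
theorem stmt8_primitive_L1_bound :
    ∃ C : ℝ, 0 < C ∧
      ∀ (n : ℕ), 0 < n →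
      ∀ (g g' : ℝ → ℝ),
        Function.Periodic g (2 * π) →
        IntervalIntegrable g volume 0 (2 * π) →
        IntervalIntegrable g' volume 0 (2 * π) →
        (∀ a b, a ∈ Set.Icc (0:ℝ) (2 * π) → b ∈ Set.Icc (0:ℝ) (2 * π) →
          g b - g a = ∫ t in a..b, g' t) →
        (∫ θ in (0:ℝ)..(2 * π),
            |∫ s in (0:ℝ)..θ,
              g s * ((deriv (fun t => (Real.sqrt 2 / n) * Real.cos (n * t)) s) ^ 2 - 1)|) ≤
          (C / n) * ((∫ θ in (0:ℝ)..(2 * π), |g θ|) + ∫ θ in (0:ℝ)..(2 * π), |g' θ|) := by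
  refine ⟨π, pi_pos, fun n hn g g' _ hg hg' hftc ↦ ?_⟩
  have hk : (0 : ℝ) < 2 * n := by positivity
  have h2π : (0 : ℝ) ≤ 2 * π := by positivity
  simp_rw [sq_deriv_sqrt_two_div_mul_cos_sub_one (Nat.cast_ne_zero.2 hn.ne'), mul_neg,
    intervalIntegral.integral_neg, abs_neg]
  set B := ∫ θ in (0:ℝ)..(2 * π), |g' θ|
  have hpointwise : ∀ θ ∈ Icc 0 (2 * π),
      |∫ s in 0..θ, g s * cos (2 * n * s)| ≤ (|g θ| + B) / (2 * n) := fun θ hθ ↦ by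
    have hsub : uIcc 0 θ ⊆ uIcc 0 (2 * π) := uIcc_subset_uIcc_left (uIcc_of_le h2π ▸ hθ)
    refine (abs_integral_mul_cos_le hk hθ.1 (hg'.mono_set hsub) ?_).trans ?_
    · intro x hx
      rw [uIcc_of_le hθ.1] at hx
      exact hftc 0 x ⟨le_rfl, h2π⟩ ⟨hx.1, hx.2.trans hθ.2⟩
    · gcongr
      exact integral_mono_interval le_rfl hθ.1 hθ.2
        (Filter.Eventually.of_forall fun t ↦ abs_nonneg _) hg'.abs
  have hprimitive : ContinuousOn (fun θ ↦ ∫ s in 0..θ, g s * cos (2 * n * s)) (uIcc 0 (2 * π)) :=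
    continuousOn_primitive_interval' (hg.mul_continuousOn (by fun_prop)) left_mem_uIcc
  calc _ ≤ ∫ θ in (0:ℝ)..(2 * π), (|g θ| + B) / (2 * n) :=
        integral_mono_on h2π hprimitive.abs.intervalIntegrable
          ((hg.abs.add intervalIntegrable_const).div_const _) hpointwise
    _ = ((∫ θ in (0:ℝ)..(2 * π), |g θ|) + 2 * π * B) / (2 * n) := by
        rw [intervalIntegral.integral_div, integral_add hg.abs intervalIntegrable_const,
          intervalIntegral.integral_const, smul_eq_mul, sub_zero]
    _ ≤ π / n * ((∫ θ in (0:ℝ)..(2 * π), |g θ|) + B) := by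
        have hA : 0 ≤ ∫ θ in (0:ℝ)..(2 * π), |g θ| := integral_nonneg h2π fun _ _ ↦ abs_nonneg _
        have hB : 0 ≤ B := integral_nonneg h2π fun _ _ ↦ abs_nonneg _
        field_simp
        nlinarith [pi_gt_three]
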